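/- Let m ≥ 1 and j ≥ 2m+1 be integers, and let u be a solution of the hyperbolic Euler–Darboux equation on an open set U ⊆ ℝ² with ξ + η ≠ 0 on U. Then □^m_j u = 0 identically on U. -/

import Mathlib

open scoped ContDiff


/-- Partial derivative of a real-valued function on `ℝ²` in the direction `v`. -/
noncomputable def pdv (v : ℝ × ℝ) (f : ℝ × ℝ → ℝ) : ℝ × ℝ → ℝ := fun p => fderiv ℝ f p v

/-- Partial derivative with respect to the first coordinate (`ξ`). -/
noncomputable def px : (ℝ × ℝ → ℝ) → ℝ × ℝ → ℝ := pdv (1, 0)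

/-- Partial derivative with respect to the second coordinate (`η`). -/
noncomputable def py : (ℝ × ℝ → ℝ) → ℝ × ℝ → ℝ := pdv (0, 1)

/-- The operator `□f = ∂_ξ f − ∂_η f`. -/
noncomputable def box (f : ℝ × ℝ → ℝ) : ℝ × ℝ → ℝ := fun p => px f p - py f p

/-- The operator `τf = ξ²∂_ξ f − η²∂_η f + ((ξ−η)/2)f`. -/
noncomputable def tau (f : ℝ × ℝ → ℝ) : ℝ × ℝ → ℝ :=
  fun p => p.1 ^ 2 * px f p - p.2 ^ 2 * py f p + ((p.1 - p.2) / 2) * f p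

/-- `□^m_0 = □^m` and `□^m_{j+1} = [□^m_j, τ]`. -/
noncomputable def boxmj (m : ℕ) : ℕ → (ℝ × ℝ → ℝ) → ℝ × ℝ → ℝ
  | 0, f => box^[m] f
  | j + 1, f => boxmj m j (tau f) - tau (boxmj m j f)

/-- `u` is a solution of the hyperbolic Euler–Darboux equation
`2(ξ+η)u_ξη + u_ξ + u_η = 0` on `U`. -/
def IsHypEDSolution (U : Set (ℝ × ℝ)) (u : ℝ × ℝ → ℝ) : Prop :=
  ContDiffOn ℝ (⊤ : ℕ∞) u U ∧
    ∀ p ∈ U, 2 * (p.1 + p.2) * py (px u) p + px u p + py u p = 0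

/-! ### Auxiliary development -/

section ED

variable {U : Set (ℝ × ℝ)} {f g : ℝ × ℝ → ℝ} {p : ℝ × ℝ}

/-- Smooth on `U`. -/
def EDSm (U : Set (ℝ × ℝ)) (f : ℝ × ℝ → ℝ) : Prop := ContDiffOn ℝ ∞ f U

theorem EDSm.dAt (hU : IsOpen U) (hf : EDSm U f) (hp : p ∈ U) : DifferentiableAt ℝ f p :=
  (hf.differentiableOn (by simp)).differentiableAt (hU.mem_nhds hp)

theorem EDSm.pdv (hU : IsOpen U) (hf : EDSm U f) (v : ℝ × ℝ) : EDSm U (pdv v f) := by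
  have h1 : ContDiffOn ℝ ∞ (fderiv ℝ f) U := hf.fderiv_of_isOpen hU (le_of_eq rfl)
  exact h1.clm_apply contDiffOn_const

theorem pdv_eqOn (hU : IsOpen U) (h : Set.EqOn f g U) (v : ℝ × ℝ) :
    Set.EqOn (pdv v f) (pdv v g) U := fun p hp => by
  have : f =ᶠ[nhds p] g := Filter.eventuallyEq_of_mem (hU.mem_nhds hp) h
  simp only [pdv, this.fderiv_eq]

theorem pdv_add (v : ℝ × ℝ) {a b : ℝ × ℝ → ℝ} (ha : DifferentiableAt ℝ a p)
    (hb : DifferentiableAt ℝ b p) :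
    pdv v (fun q => a q + b q) p = pdv v a p + pdv v b p := by
  simp [pdv, fderiv_fun_add ha hb]

theorem pdv_sub (v : ℝ × ℝ) {a b : ℝ × ℝ → ℝ} (ha : DifferentiableAt ℝ a p)
    (hb : DifferentiableAt ℝ b p) :
    pdv v (fun q => a q - b q) p = pdv v a p - pdv v b p := by
  simp [pdv, fderiv_fun_sub ha hb]

theorem pdv_mul (v : ℝ × ℝ) {a b : ℝ × ℝ → ℝ} (ha : DifferentiableAt ℝ a p)
    (hb : DifferentiableAt ℝ b p) :
    pdv v (fun q => a q * b q) p = a p * pdv v b p + b p * pdv v a p := by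
  simp [pdv, fderiv_fun_mul ha hb]

theorem pdv_const_mul (v : ℝ × ℝ) {a : ℝ × ℝ → ℝ} (ha : DifferentiableAt ℝ a p) (c : ℝ) :
    pdv v (fun q => c * a q) p = c * pdv v a p := by
  simp [pdv, fderiv_const_mul ha c]

theorem pdv_fst (v : ℝ × ℝ) : pdv v (fun q : ℝ × ℝ => q.1) p = v.1 := by
  have := (hasFDerivAt_fst (p := p) (𝕜 := ℝ)).fderiv
  simp [pdv, this]

theorem pdv_snd (v : ℝ × ℝ) : pdv v (fun q : ℝ × ℝ => q.2) p = v.2 := by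
  have := (hasFDerivAt_snd (p := p) (𝕜 := ℝ)).fderiv
  simp [pdv, this]

theorem pdv_sq1 (v : ℝ × ℝ) : pdv v (fun q : ℝ × ℝ => q.1 ^ 2) p = 2 * p.1 * v.1 := by
  have h : (fun q : ℝ × ℝ => q.1 ^ 2) = fun q : ℝ × ℝ => q.1 * q.1 := by
    funext q; ring
  rw [h, pdv_mul v differentiableAt_fst differentiableAt_fst, pdv_fst]; ring

theorem pdv_sq2 (v : ℝ × ℝ) : pdv v (fun q : ℝ × ℝ => q.2 ^ 2) p = 2 * p.2 * v.2 := by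
  have h : (fun q : ℝ × ℝ => q.2 ^ 2) = fun q : ℝ × ℝ => q.2 * q.2 := by
    funext q; ring
  rw [h, pdv_mul v differentiableAt_snd differentiableAt_snd, pdv_snd]; ring

theorem pdv_div_const (v : ℝ × ℝ) {a : ℝ × ℝ → ℝ} (ha : DifferentiableAt ℝ a p) (c : ℝ) :
    pdv v (fun q => a q / c) p = pdv v a p / c := by
  simp only [div_eq_mul_inv, pdv, fderiv_mul_const ha (c⁻¹)]
  simp [mul_comm]

theorem pdv_coef3 (v : ℝ × ℝ) : pdv v (fun q : ℝ × ℝ => (q.1 - q.2) / 2) p = (v.1 - v.2) / 2 := by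
  rw [pdv_div_const v (a := fun q : ℝ × ℝ => q.1 - q.2) (differentiableAt_fst.sub differentiableAt_snd),
    pdv_sub v differentiableAt_fst differentiableAt_snd, pdv_fst, pdv_snd]

theorem pdv_comm (hU : IsOpen U) (hf : EDSm U f) (hp : p ∈ U) (v w : ℝ × ℝ) :
    pdv v (pdv w f) p = pdv w (pdv v f) p := by
  have hev : ∀ᶠ q in nhds p, HasFDerivAt f (fderiv ℝ f q) q := by
    filter_upwards [hU.mem_nhds hp] with q hq using (hf.dAt hU hq).hasFDerivAt
  have hsm : ContDiffOn ℝ ∞ (fderiv ℝ f) U := hf.fderiv_of_isOpen hU (le_of_eq rfl)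
  have hf' : DifferentiableAt ℝ (fderiv ℝ f) p :=
    (hsm.differentiableOn (by simp)).differentiableAt (hU.mem_nhds hp)
  have hsym := second_derivative_symmetric_of_eventually hev hf'.hasFDerivAt v w
  have h1 : ∀ z : ℝ × ℝ, fderiv ℝ (fun q => fderiv ℝ f q z) p
      = ((fderiv ℝ f p).comp (fderiv ℝ (fun _ : ℝ × ℝ => z) p)
          + (fderiv ℝ (fderiv ℝ f) p).flip z) := by
    intro z
    exact fderiv_clm_apply hf' (differentiableAt_const _)
  show fderiv ℝ (fun q => fderiv ℝ f q w) p v = fderiv ℝ (fun q => fderiv ℝ f q v) p w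
  rw [h1 w, h1 v]
  simpa using hsym

/-! ### Smoothness and locality of the basic operators -/

theorem EDSm.box (hU : IsOpen U) (hf : EDSm U f) : EDSm U (box f) :=
  (hf.pdv hU (1, 0)).sub (hf.pdv hU (0, 1))

theorem contDiff_sq1 : ContDiffOn ℝ ∞ (fun q : ℝ × ℝ => q.1 ^ 2) U :=
  ((contDiff_fst.pow 2)).contDiffOn

theorem contDiff_sq2 : ContDiffOn ℝ ∞ (fun q : ℝ × ℝ => q.2 ^ 2) U :=
  ((contDiff_snd.pow 2)).contDiffOn

theorem contDiff_coef3 : ContDiffOn ℝ ∞ (fun q : ℝ × ℝ => (q.1 - q.2) / 2) U :=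
  ((contDiff_fst.sub contDiff_snd).div_const 2).contDiffOn

theorem EDSm.tau (hU : IsOpen U) (hf : EDSm U f) : EDSm U (tau f) :=
  ((contDiff_sq1.mul (hf.pdv hU (1, 0))).sub (contDiff_sq2.mul (hf.pdv hU (0, 1)))).add
    (contDiff_coef3.mul hf)

theorem tau_eqOn (hU : IsOpen U) (h : Set.EqOn f g U) : Set.EqOn (tau f) (tau g) U := by
  intro p hp
  simp only [tau, px, py, pdv_eqOn hU h (1, 0) hp, pdv_eqOn hU h (0, 1) hp, h hp]

theorem box_eqOn (hU : IsOpen U) (h : Set.EqOn f g U) : Set.EqOn (box f) (box g) U := by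
  intro p hp
  simp only [box, px, py, pdv_eqOn hU h (1, 0) hp, pdv_eqOn hU h (0, 1) hp]

theorem tau_add (hU : IsOpen U) (hf : EDSm U f) (hg : EDSm U g) :
    Set.EqOn (tau (f + g)) (tau f + tau g) U := by
  intro p hp
  have h1 : Differentiable ℝ (fun _ : ℝ × ℝ => (0:ℝ)) := differentiable_const 0
  have hdf := hf.dAt hU hp
  have hdg := hg.dAt hU hp
  have e1 : pdv (1,0) (f + g) p = pdv (1,0) f p + pdv (1,0) g p := pdv_add _ hdf hdg
  have e2 : pdv (0,1) (f + g) p = pdv (0,1) f p + pdv (0,1) g p := pdv_add _ hdf hdg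
  simp only [tau, px, py, e1, e2, Pi.add_apply]
  ring

theorem tau_sub (hU : IsOpen U) (hf : EDSm U f) (hg : EDSm U g) :
    Set.EqOn (tau (f - g)) (tau f - tau g) U := by
  intro p hp
  have hdf := hf.dAt hU hp
  have hdg := hg.dAt hU hp
  have e1 : pdv (1,0) (f - g) p = pdv (1,0) f p - pdv (1,0) g p := pdv_sub _ hdf hdg
  have e2 : pdv (0,1) (f - g) p = pdv (0,1) f p - pdv (0,1) g p := pdv_sub _ hdf hdg
  simp only [tau, px, py, e1, e2, Pi.sub_apply]
  ring

theorem box_add (hU : IsOpen U) (hf : EDSm U f) (hg : EDSm U g) :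
    Set.EqOn (box (f + g)) (box f + box g) U := by
  intro p hp
  have hdf := hf.dAt hU hp
  have hdg := hg.dAt hU hp
  have e1 : pdv (1,0) (f + g) p = pdv (1,0) f p + pdv (1,0) g p := pdv_add _ hdf hdg
  have e2 : pdv (0,1) (f + g) p = pdv (0,1) f p + pdv (0,1) g p := pdv_add _ hdf hdg
  simp only [box, px, py, e1, e2, Pi.add_apply]
  ring

theorem box_sub (hU : IsOpen U) (hf : EDSm U f) (hg : EDSm U g) :
    Set.EqOn (box (f - g)) (box f - box g) U := by
  intro p hp
  have hdf := hf.dAt hU hp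
  have hdg := hg.dAt hU hp
  have e1 : pdv (1,0) (f - g) p = pdv (1,0) f p - pdv (1,0) g p := pdv_sub _ hdf hdg
  have e2 : pdv (0,1) (f - g) p = pdv (0,1) f p - pdv (0,1) g p := pdv_sub _ hdf hdg
  simp only [box, px, py, e1, e2, Pi.sub_apply]
  ring

theorem tau_zero_eval : tau (fun _ : ℝ × ℝ => (0:ℝ)) p = 0 := by
  simp [tau, px, py, pdv]

/-! ### Operators -/

/-- The commutator-with-`tau` map. -/
noncomputable def edRho (P : (ℝ × ℝ → ℝ) → ℝ × ℝ → ℝ) : (ℝ × ℝ → ℝ) → ℝ × ℝ → ℝ :=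
  fun f => P (tau f) - tau (P f)

/-- Pointwise sum of operators. -/
noncomputable def opAdd (P Q : (ℝ × ℝ → ℝ) → ℝ × ℝ → ℝ) : (ℝ × ℝ → ℝ) → ℝ × ℝ → ℝ :=
  fun f => P f + Q f

/-- Weak equality of operators: equal on `U` when applied to functions smooth on `U`. -/
def OpEq (U : Set (ℝ × ℝ)) (P Q : (ℝ × ℝ → ℝ) → ℝ × ℝ → ℝ) : Prop :=
  ∀ f, EDSm U f → Set.EqOn (P f) (Q f) U

/-- Weak vanishing of an operator. -/
def OpEq0 (U : Set (ℝ × ℝ)) (P : (ℝ × ℝ → ℝ) → ℝ × ℝ → ℝ) : Prop :=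
  ∀ f, EDSm U f → ∀ p ∈ U, P f p = 0

/-- A "good" operator: preserves smoothness, is local, and is additive/subtractive on `U`. -/
structure EDGood (U : Set (ℝ × ℝ)) (P : (ℝ × ℝ → ℝ) → ℝ × ℝ → ℝ) : Prop where
  sm : ∀ f, EDSm U f → EDSm U (P f)
  loc : ∀ f g, Set.EqOn f g U → Set.EqOn (P f) (P g) U
  add : ∀ f g, EDSm U f → EDSm U g → Set.EqOn (P (f + g)) (P f + P g) U
  sub : ∀ f g, EDSm U f → EDSm U g → Set.EqOn (P (f - g)) (P f - P g) U

theorem edGood_box (hU : IsOpen U) : EDGood U box :=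
  ⟨fun _ hf => hf.box hU, fun _ _ h => box_eqOn hU h,
   fun _ _ hf hg => box_add hU hf hg, fun _ _ hf hg => box_sub hU hf hg⟩

theorem edGood_tau (hU : IsOpen U) : EDGood U tau :=
  ⟨fun _ hf => hf.tau hU, fun _ _ h => tau_eqOn hU h,
   fun _ _ hf hg => tau_add hU hf hg, fun _ _ hf hg => tau_sub hU hf hg⟩

theorem edGood_id (hU : IsOpen U) : EDGood U (fun f => f) :=
  ⟨fun _ hf => hf, fun _ _ h => h, fun _ _ _ _ _ _ => rfl, fun _ _ _ _ _ _ => rfl⟩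

theorem EDGood.zeroFun (hU : IsOpen U) {P} (hP : EDGood U P) :
    Set.EqOn (P (fun _ => (0:ℝ))) (fun _ => (0:ℝ)) U := by
  intro p hp
  have h0 : EDSm U (fun _ : ℝ × ℝ => (0:ℝ)) := contDiffOn_const
  have h := hP.sub (fun _ => (0:ℝ)) (fun _ => (0:ℝ)) h0 h0
  have e : ((fun _ : ℝ × ℝ => (0:ℝ)) - (fun _ : ℝ × ℝ => (0:ℝ))) = (fun _ : ℝ × ℝ => (0:ℝ)) := by
    funext q; simp
  have := h hp
  rw [e] at this
  simpa using this

theorem EDGood.comp (hU : IsOpen U) {P Q} (hP : EDGood U P) (hQ : EDGood U Q) :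
    EDGood U (P ∘ Q) := by
  refine ⟨fun f hf => hP.sm _ (hQ.sm _ hf), fun f g h => hP.loc _ _ (hQ.loc _ _ h), ?_, ?_⟩
  · intro f g hf hg p hp
    have h1 : Set.EqOn (Q (f + g)) (Q f + Q g) U := hQ.add _ _ hf hg
    have h2 : Set.EqOn (P (Q (f + g))) (P (Q f + Q g)) U := hP.loc _ _ h1
    have h3 : Set.EqOn (P (Q f + Q g)) (P (Q f) + P (Q g)) U :=
      hP.add _ _ (hQ.sm _ hf) (hQ.sm _ hg)
    simpa using (h2 hp).trans (h3 hp)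
  · intro f g hf hg p hp
    have h1 : Set.EqOn (Q (f - g)) (Q f - Q g) U := hQ.sub _ _ hf hg
    have h2 : Set.EqOn (P (Q (f - g))) (P (Q f - Q g)) U := hP.loc _ _ h1
    have h3 : Set.EqOn (P (Q f - Q g)) (P (Q f) - P (Q g)) U :=
      hP.sub _ _ (hQ.sm _ hf) (hQ.sm _ hg)
    simpa using (h2 hp).trans (h3 hp)

theorem EDGood.opAdd (hU : IsOpen U) {P Q} (hP : EDGood U P) (hQ : EDGood U Q) :
    EDGood U (opAdd P Q) := by
  refine ⟨fun f hf => (hP.sm _ hf).add (hQ.sm _ hf), ?_, ?_, ?_⟩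
  · intro f g h p hp
    show P f p + Q f p = P g p + Q g p
    rw [hP.loc _ _ h hp, hQ.loc _ _ h hp]
  · intro f g hf hg p hp
    have e1 := hP.add f g hf hg hp
    have e2 := hQ.add f g hf hg hp
    simp only [Pi.add_apply] at e1 e2
    show P (f + g) p + Q (f + g) p = P f p + Q f p + (P g p + Q g p)
    rw [e1, e2]; ring
  · intro f g hf hg p hp
    have e1 := hP.sub f g hf hg hp
    have e2 := hQ.sub f g hf hg hp
    simp only [Pi.sub_apply] at e1 e2
    show P (f - g) p + Q (f - g) p = P f p + Q f p - (P g p + Q g p)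
    rw [e1, e2]; ring

theorem EDGood.rho (hU : IsOpen U) {P} (hP : EDGood U P) : EDGood U (edRho P) := by
  refine ⟨fun f hf => ((hP.sm _ (hf.tau hU)).sub ((hP.sm _ hf).tau hU)), ?_, ?_, ?_⟩
  · intro f g h p hp
    simp only [edRho, Pi.sub_apply]
    rw [hP.loc _ _ (tau_eqOn hU h) hp, tau_eqOn hU (hP.loc _ _ h) hp]
  · intro f g hf hg p hp
    simp only [edRho, Pi.sub_apply, Pi.add_apply]
    have e1 : P (tau (f + g)) p = P (tau f) p + P (tau g) p := by
      rw [hP.loc _ _ (tau_add hU hf hg) hp]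
      exact hP.add _ _ (hf.tau hU) (hg.tau hU) hp
    have e2 : tau (P (f + g)) p = tau (P f) p + tau (P g) p := by
      rw [tau_eqOn hU (hP.add _ _ hf hg) hp]
      exact tau_add hU (hP.sm _ hf) (hP.sm _ hg) hp
    rw [e1, e2]; ring
  · intro f g hf hg p hp
    simp only [edRho, Pi.sub_apply]
    have e1 : P (tau (f - g)) p = P (tau f) p - P (tau g) p := by
      rw [hP.loc _ _ (tau_sub hU hf hg) hp]
      exact hP.sub _ _ (hf.tau hU) (hg.tau hU) hp
    have e2 : tau (P (f - g)) p = tau (P f) p - tau (P g) p := by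
      rw [tau_eqOn hU (hP.sub _ _ hf hg) hp]
      exact tau_sub hU (hP.sm _ hf) (hP.sm _ hg) hp
    rw [e1, e2]; ring

theorem EDGood.rho_iter (hU : IsOpen U) {P} (hP : EDGood U P) (k : ℕ) :
    EDGood U (edRho^[k] P) := by
  induction k with
  | zero => exact hP
  | succ k ih => rw [Function.iterate_succ_apply']; exact ih.rho hU

/-! ### Weak-equality calculus -/

theorem OpEq.trans' {P Q R} (h1 : OpEq U P Q) (h2 : OpEq U Q R) : OpEq U P R :=
  fun f hf p hp => (h1 f hf hp).trans (h2 f hf hp)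

theorem OpEq0_of_opEq {P Q} (h1 : OpEq U P Q) (h2 : OpEq0 U Q) : OpEq0 U P :=
  fun f hf p hp => (h1 f hf hp).trans (h2 f hf p hp)

theorem OpEq.rho (hU : IsOpen U) {P Q} (h : OpEq U P Q) : OpEq U (edRho P) (edRho Q) := by
  intro f hf p hp
  simp only [edRho, Pi.sub_apply]
  rw [h (tau f) (hf.tau hU) hp, tau_eqOn hU (h f hf) hp]

theorem OpEq.rho_iter (hU : IsOpen U) {P Q} (h : OpEq U P Q) (k : ℕ) :
    OpEq U (edRho^[k] P) (edRho^[k] Q) := by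
  induction k with
  | zero => exact h
  | succ k ih => rw [Function.iterate_succ_apply', Function.iterate_succ_apply']
                 exact ih.rho hU

theorem OpEq0.rho (hU : IsOpen U) {P} (h : OpEq0 U P) : OpEq0 U (edRho P) := by
  intro f hf p hp
  simp only [edRho, Pi.sub_apply]
  have h1 : P (tau f) p = 0 := h (tau f) (hf.tau hU) p hp
  have h2 : tau (P f) p = 0 := by
    have : Set.EqOn (P f) (fun _ => (0:ℝ)) U := fun q hq => h f hf q hq
    rw [tau_eqOn hU this hp]
    exact tau_zero_eval
  rw [h1, h2]; ring

theorem OpEq0.rho_iter (hU : IsOpen U) {P} (h : OpEq0 U P) (k : ℕ) :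
    OpEq0 U (edRho^[k] P) := by
  induction k with
  | zero => exact h
  | succ k ih => rw [Function.iterate_succ_apply']; exact ih.rho hU

theorem OpEq0.opAdd' {P Q} (h1 : OpEq0 U P) (h2 : OpEq0 U Q) : OpEq0 U (opAdd P Q) := by
  intro f hf p hp
  simp only [opAdd, Pi.add_apply, h1 f hf p hp, h2 f hf p hp, add_zero]

/-- Leibniz rule for `edRho` over composition. -/
theorem edRho_comp (hU : IsOpen U) {P Q} (hP : EDGood U P) (hQ : EDGood U Q) :
    OpEq U (edRho (P ∘ Q)) (opAdd ((edRho P) ∘ Q) (P ∘ (edRho Q))) := by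
  intro f hf p hp
  simp only [edRho, opAdd, Function.comp_apply, Pi.sub_apply, Pi.add_apply]
  -- P (Q (tau f)) - tau (P (Q f)) = (P (tau (Q f)) - tau (P (Q f))) + P (Q (tau f) - tau (Q f))
  have hsub : P (Q (tau f) - tau (Q f)) p = P (Q (tau f)) p - P (tau (Q f)) p := by
    have := hP.sub (Q (tau f)) (tau (Q f)) (hQ.sm _ (hf.tau hU)) ((hQ.sm _ hf).tau hU) hp
    simpa using this
  rw [hsub]; ring

theorem edRho_opAdd (hU : IsOpen U) {P Q} (hP : EDGood U P) (hQ : EDGood U Q) :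
    OpEq U (edRho (opAdd P Q)) (opAdd (edRho P) (edRho Q)) := by
  intro f hf p hp
  simp only [edRho, opAdd, Pi.sub_apply, Pi.add_apply]
  have e2 : tau (P f + Q f) p = tau (P f) p + tau (Q f) p :=
    tau_add hU (hP.sm _ hf) (hQ.sm _ hf) hp
  rw [e2]; ring

theorem edRho_iter_opAdd (hU : IsOpen U) {P Q} (hP : EDGood U P) (hQ : EDGood U Q) (k : ℕ) :
    OpEq U (edRho^[k] (opAdd P Q)) (opAdd (edRho^[k] P) (edRho^[k] Q)) := by
  induction k generalizing P Q with
  | zero => exact fun f hf p hp => rfl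
  | succ k ih =>
    have h1 : OpEq U (edRho^[k+1] (opAdd P Q)) (edRho^[k] (opAdd (edRho P) (edRho Q))) := by
      rw [Function.iterate_succ_apply]
      exact (edRho_opAdd hU hP hQ).rho_iter hU k
    exact h1.trans' (ih (hP.rho hU) (hQ.rho hU))

/-! ### The `sl2` commutator identities -/

/-- `2σ`, where `σ` is the Euler-type operator. -/
noncomputable def sop (f : ℝ × ℝ → ℝ) : ℝ × ℝ → ℝ :=
  fun p => 2 * p.1 * px f p + 2 * p.2 * py f p + f p

/-- `2τ`. -/
noncomputable def ttop (f : ℝ × ℝ → ℝ) : ℝ × ℝ → ℝ := fun p => 2 * tau f p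

theorem tau_def (f : ℝ × ℝ → ℝ) : tau f =
    fun p => p.1 ^ 2 * pdv (1, 0) f p - p.2 ^ 2 * pdv (0, 1) f p + (p.1 - p.2) / 2 * f p := rfl

theorem box_def (f : ℝ × ℝ → ℝ) : box f = fun p => pdv (1, 0) f p - pdv (0, 1) f p := rfl

theorem sop_def (f : ℝ × ℝ → ℝ) : sop f =
    fun p => 2 * p.1 * pdv (1, 0) f p + 2 * p.2 * pdv (0, 1) f p + f p := rfl

theorem tau_const_mul (hU : IsOpen U) (hg : EDSm U g) (hp : p ∈ U) (c : ℝ) :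
    tau (fun q => c * g q) p = c * tau g p := by
  have hd := hg.dAt hU hp
  simp only [tau, px, py, pdv_const_mul _ hd c]
  ring

theorem identA (hU : IsOpen U) : OpEq U (edRho box) sop := by
  intro f hf p hp
  show box (tau f) p - tau (box f) p = sop f p
  have hd : DifferentiableAt ℝ f p := hf.dAt hU hp
  have hd1 : DifferentiableAt ℝ (pdv (1, 0) f) p := (hf.pdv hU (1, 0)).dAt hU hp
  have hd2 : DifferentiableAt ℝ (pdv (0, 1) f) p := (hf.pdv hU (0, 1)).dAt hU hp
  have hsq1 : DifferentiableAt ℝ (fun q : ℝ × ℝ => q.1 ^ 2) p := differentiableAt_fst.pow 2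
  have hsq2 : DifferentiableAt ℝ (fun q : ℝ × ℝ => q.2 ^ 2) p := differentiableAt_snd.pow 2
  have hcoef : DifferentiableAt ℝ (fun q : ℝ × ℝ => (q.1 - q.2) / 2) p := by fun_prop
  have hm1 : DifferentiableAt ℝ (fun q : ℝ × ℝ => q.1 ^ 2 * pdv (1, 0) f q) p := hsq1.mul hd1
  have hm2 : DifferentiableAt ℝ (fun q : ℝ × ℝ => q.2 ^ 2 * pdv (0, 1) f q) p := hsq2.mul hd2
  have hm12 : DifferentiableAt ℝ
      (fun q : ℝ × ℝ => q.1 ^ 2 * pdv (1, 0) f q - q.2 ^ 2 * pdv (0, 1) f q) p := hm1.sub hm2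
  have hm3 : DifferentiableAt ℝ (fun q : ℝ × ℝ => (q.1 - q.2) / 2 * f q) p := hcoef.mul hd
  have hbx : DifferentiableAt ℝ (fun q : ℝ × ℝ => pdv (1, 0) f q - pdv (0, 1) f q) p :=
    hd1.sub hd2
  simp only [box_def, tau_def, sop_def, px, py, pdv_add, pdv_sub, pdv_mul, pdv_sq1, pdv_sq2,
    pdv_coef3, hd, hd1, hd2, hsq1, hsq2, hcoef, hm1, hm2, hm12, hm3, hbx,
    differentiableAt_fst, differentiableAt_snd]
  rw [pdv_comm hU hf hp (0, 1) (1, 0)]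
  ring

theorem identB (hU : IsOpen U) : OpEq U (edRho sop) ttop := by
  intro f hf p hp
  show sop (tau f) p - tau (sop f) p = ttop f p
  have hd : DifferentiableAt ℝ f p := hf.dAt hU hp
  have hd1 : DifferentiableAt ℝ (pdv (1, 0) f) p := (hf.pdv hU (1, 0)).dAt hU hp
  have hd2 : DifferentiableAt ℝ (pdv (0, 1) f) p := (hf.pdv hU (0, 1)).dAt hU hp
  have hsq1 : DifferentiableAt ℝ (fun q : ℝ × ℝ => q.1 ^ 2) p := differentiableAt_fst.pow 2
  have hsq2 : DifferentiableAt ℝ (fun q : ℝ × ℝ => q.2 ^ 2) p := differentiableAt_snd.pow 2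
  have hcoef : DifferentiableAt ℝ (fun q : ℝ × ℝ => (q.1 - q.2) / 2) p := by fun_prop
  have hm1 : DifferentiableAt ℝ (fun q : ℝ × ℝ => q.1 ^ 2 * pdv (1, 0) f q) p := hsq1.mul hd1
  have hm2 : DifferentiableAt ℝ (fun q : ℝ × ℝ => q.2 ^ 2 * pdv (0, 1) f q) p := hsq2.mul hd2
  have hm12 : DifferentiableAt ℝ
      (fun q : ℝ × ℝ => q.1 ^ 2 * pdv (1, 0) f q - q.2 ^ 2 * pdv (0, 1) f q) p := hm1.sub hm2
  have hm3 : DifferentiableAt ℝ (fun q : ℝ × ℝ => (q.1 - q.2) / 2 * f q) p := hcoef.mul hd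
  have hc1 : DifferentiableAt ℝ (fun q : ℝ × ℝ => 2 * q.1) p :=
    (differentiableAt_const 2).mul differentiableAt_fst
  have hc2 : DifferentiableAt ℝ (fun q : ℝ × ℝ => 2 * q.2) p :=
    (differentiableAt_const 2).mul differentiableAt_snd
  have hM1 : DifferentiableAt ℝ (fun q : ℝ × ℝ => 2 * q.1 * pdv (1, 0) f q) p := hc1.mul hd1
  have hM2 : DifferentiableAt ℝ (fun q : ℝ × ℝ => 2 * q.2 * pdv (0, 1) f q) p := hc2.mul hd2
  have hM12 : DifferentiableAt ℝ
      (fun q : ℝ × ℝ => 2 * q.1 * pdv (1, 0) f q + 2 * q.2 * pdv (0, 1) f q) p := hM1.add hM2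
  simp only [sop_def, tau_def, ttop, px, py, pdv_add, pdv_sub, pdv_mul, pdv_const_mul, pdv_sq1,
    pdv_sq2, pdv_coef3, pdv_fst, pdv_snd,
    hd, hd1, hd2, hsq1, hsq2, hcoef, hm1, hm2, hm12, hm3, hc1, hc2, hM1, hM2, hM12,
    differentiableAt_fst, differentiableAt_snd]
  rw [pdv_comm hU hf hp (0, 1) (1, 0)]
  ring

theorem identC (hU : IsOpen U) : OpEq0 U (edRho ttop) := by
  intro f hf p hp
  show ttop (tau f) p - tau (ttop f) p = 0
  have h1 : tau (ttop f) p = 2 * tau (tau f) p := tau_const_mul hU (hf.tau hU) hp 2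
  show 2 * tau (tau f) p - tau (ttop f) p = 0
  rw [h1]; ring

/-! ### Vanishing of iterated commutators -/

/-- `edRho^[k] P` vanishes weakly for all `k ≥ a`. -/
def ZAt (U : Set (ℝ × ℝ)) (P : (ℝ × ℝ → ℝ) → ℝ × ℝ → ℝ) (a : ℕ) : Prop :=
  ∀ k, a ≤ k → OpEq0 U (edRho^[k] P)

theorem ZAt.mono {P a b} (h : ZAt U P a) (hab : a ≤ b) : ZAt U P b :=
  fun k hk => h k (hab.trans hk)

theorem ZAt.of_opEq0 (hU : IsOpen U) {P} (h : OpEq0 U P) : ZAt U P 0 :=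
  fun k _ => h.rho_iter hU k

theorem ZAt.shift {P a} (h : ZAt U P (a + 1)) : ZAt U (edRho P) a := by
  intro k hk
  rw [← Function.iterate_succ_apply]
  exact h (k + 1) (by omega)

theorem ZAt.comp_left0 (hU : IsOpen U) {P Q} (hQ : EDGood U Q) (h : OpEq0 U P) :
    ZAt U (P ∘ Q) 0 :=
  ZAt.of_opEq0 hU (fun f hf p hp => h (Q f) (hQ.sm f hf) p hp)

theorem ZAt.comp_right0 (hU : IsOpen U) {P Q} (hP : EDGood U P) (h : OpEq0 U Q) :
    ZAt U (P ∘ Q) 0 := by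
  apply ZAt.of_opEq0 hU
  intro f hf p hp
  have h1 : Set.EqOn (Q f) (fun _ => (0:ℝ)) U := fun q hq => h f hf q hq
  exact (hP.loc _ _ h1 hp).trans (hP.zeroFun hU hp)

theorem ZAt.comp (hU : IsOpen U) :
    ∀ n a b P Q, a + b ≤ n → EDGood U P → EDGood U Q → ZAt U P a → ZAt U Q b →
      ZAt U (P ∘ Q) (a + b - 1) := by
  intro n
  induction n with
  | zero =>
    intro a b P Q hab hP hQ hZP hZQ
    have ha : a = 0 := by omega
    subst ha
    exact (ZAt.comp_left0 hU hQ (hZP 0 le_rfl)).mono (by omega)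
  | succ n ih =>
    intro a b P Q hab hP hQ hZP hZQ
    rcases a with _ | a'
    · exact (ZAt.comp_left0 hU hQ (hZP 0 le_rfl)).mono (by omega)
    rcases b with _ | b'
    · exact (ZAt.comp_right0 hU hP (hZQ 0 le_rfl)).mono (by omega)
    intro k hk
    obtain ⟨k', rfl⟩ : ∃ k', k = k' + 1 := ⟨k - 1, by omega⟩
    have hL : OpEq0 U (edRho^[k'] ((edRho P) ∘ Q)) := by
      have h := ih a' (b' + 1) (edRho P) Q (by omega) (hP.rho hU) hQ hZP.shift hZQ
      exact h k' (by omega)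
    have hR : OpEq0 U (edRho^[k'] (P ∘ (edRho Q))) := by
      have h := ih (a' + 1) b' P (edRho Q) (by omega) hP (hQ.rho hU) hZP hZQ.shift
      exact h k' (by omega)
    have hcongr : OpEq U (edRho^[k' + 1] (P ∘ Q))
        (edRho^[k'] (opAdd ((edRho P) ∘ Q) (P ∘ (edRho Q)))) := by
      rw [Function.iterate_succ_apply]
      exact (edRho_comp hU hP hQ).rho_iter hU k'
    have hsplit : OpEq U (edRho^[k'] (opAdd ((edRho P) ∘ Q) (P ∘ (edRho Q))))
        (opAdd (edRho^[k'] ((edRho P) ∘ Q)) (edRho^[k'] (P ∘ (edRho Q)))) :=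
      edRho_iter_opAdd hU ((hP.rho hU).comp hU hQ) (hP.comp hU (hQ.rho hU)) k'
    exact OpEq0_of_opEq (hcongr.trans' hsplit) (hL.opAdd' hR)

theorem zBox (hU : IsOpen U) : ZAt U box 3 := by
  have e1 : OpEq U (edRho^[3] box) (edRho^[2] sop) := by
    rw [show (3 : ℕ) = 2 + 1 from rfl, Function.iterate_succ_apply]
    exact (identA hU).rho_iter hU 2
  have e2 : OpEq U (edRho^[2] sop) (edRho^[1] ttop) := by
    rw [show (2 : ℕ) = 1 + 1 from rfl, Function.iterate_succ_apply]
    exact (identB hU).rho_iter hU 1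
  have h3 : OpEq0 U (edRho^[3] box) :=
    OpEq0_of_opEq (e1.trans' e2) (by simpa using identC hU)
  intro k hk
  obtain ⟨k', rfl⟩ : ∃ k', k = k' + 3 := ⟨k - 3, by omega⟩
  rw [Function.iterate_add_apply]
  exact h3.rho_iter hU k'

/-- `□^m` as an operator. -/
noncomputable def bpow (m : ℕ) : (ℝ × ℝ → ℝ) → ℝ × ℝ → ℝ := fun f => box^[m] f

theorem bpow_succ (m : ℕ) : bpow (m + 1) = box ∘ bpow m := by
  funext f
  simp [bpow, Function.iterate_succ_apply']

theorem edGood_bpow (hU : IsOpen U) (m : ℕ) : EDGood U (bpow m) := by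
  induction m with
  | zero => exact edGood_id hU
  | succ m ih => rw [bpow_succ]; exact (edGood_box hU).comp hU ih

theorem zBpow (hU : IsOpen U) (m : ℕ) : ZAt U (bpow m) (2 * m + 1) := by
  induction m with
  | zero =>
    have h : OpEq0 U (edRho (bpow 0)) := by
      intro f hf p hp
      show tau f p - tau f p = 0
      ring
    intro k hk
    obtain ⟨k', rfl⟩ : ∃ k', k = k' + 1 := ⟨k - 1, by omega⟩
    rw [Function.iterate_add_apply]
    exact h.rho_iter hU k'
  | succ m ih =>
    rw [bpow_succ]
    have h := ZAt.comp hU (3 + (2 * m + 1)) 3 (2 * m + 1) box (bpow m) le_rfl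
      (edGood_box hU) (edGood_bpow hU m) (zBox hU) ih
    exact h.mono (by omega)

theorem boxmj_eq_rho_iter (m j : ℕ) : boxmj m j = edRho^[j] (bpow m) := by
  induction j with
  | zero => rfl
  | succ j ih =>
    have h : boxmj m (j + 1) = edRho (boxmj m j) := by funext f; rfl
    rw [h, ih]
    exact (Function.iterate_succ_apply' edRho j (bpow m)).symm

end ED


/-- If `u` solves the hyperbolic Euler–Darboux equation and `j ≥ 2m+1`, then `□^m_j u = 0`. -/
theorem boxmj_vanishes_on_solutions (m j : ℕ) (hm : 1 ≤ m) (hj : 2 * m + 1 ≤ j)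
    (U : Set (ℝ × ℝ)) (hU : IsOpen U) (hne : ∀ p ∈ U, p.1 + p.2 ≠ 0)
    (u : ℝ × ℝ → ℝ) (hu : IsHypEDSolution U u) :
    ∀ p ∈ U, boxmj m j u p = 0 := by
  intro p hp
  have hsm : EDSm U u := hu.1.of_le (by simp)
  rw [boxmj_eq_rho_iter m j]
  exact zBpow hU m j hj u hsm p hp
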